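/- Let q be a vector of strictly positive reals and σ a permutation with q_{σ(1)} ≤ ⋯ ≤ q_{σ(n)}. Then the decreasing arrangement σ' defined by σ'(i) = σ(n+1−i) maximizes the biased permutation likelihood: for every permutation π, L(q | π) ≤ L(q | σ'), where L(q | π) = ∏_{i=1}^{n} q_{π(i)} / (∑_{j=i}^{n} q_{π(j)}). -/

import Mathlib

/-!
The numerator `∏ q_{π(i)}` of the likelihood does not depend on `π`, so it suffices to minimise
every tail sum `∑_{j ≥ i} q_{π(j)}` simultaneously. The `i`-th tail sum of any arrangement adds up
`n - i` distinct entries of `q`, and the decreasing arrangement puts exactly the `n - i` smallest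
entries there.
-/

open Finset

/-- Biased permutation likelihood. -/
noncomputable def L {n : ℕ} (q : Fin n → ℝ) (π : Equiv.Perm (Fin n)) : ℝ :=
  ∏ i : Fin n, q (π i) / ∑ j ∈ Finset.Ici i, q (π j)

/-- Exchange argument: `s` and `Iic a` differ by equally many elements, those of `Iic a` lying
below `a` and those of `s` above it. -/
theorem Monotone.sum_Iic_le_sum_of_card_eq {α M : Type*}
    [LinearOrder α] [LocallyFiniteOrderBot α] [AddCommMonoid M] [PartialOrder M]
    [IsOrderedAddMonoid M] {f : α → M} (hf : Monotone f)
    {a : α} {s : Finset α} (hs : #s = #(Iic a)) :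
    ∑ x ∈ Iic a, f x ≤ ∑ x ∈ s, f x := by
  calc ∑ x ∈ Iic a, f x
      = ∑ x ∈ Iic a ∩ s, f x + ∑ x ∈ Iic a \ s, f x := (sum_inter_add_sum_sdiff _ _ _).symm
    _ ≤ ∑ x ∈ Iic a ∩ s, f x + #(Iic a \ s) • f a := by
      gcongr
      exact sum_le_card_nsmul _ _ _ fun x hx ↦ hf (mem_Iic.mp (mem_sdiff.mp hx).1)
    _ = ∑ x ∈ s ∩ Iic a, f x + #(s \ Iic a) • f a := by
      rw [inter_comm, card_sdiff_comm hs.symm]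
    _ ≤ ∑ x ∈ s ∩ Iic a, f x + ∑ x ∈ s \ Iic a, f x := by
      gcongr
      refine card_nsmul_le_sum _ _ _ fun x hx ↦ hf ?_
      exact (not_le.mp fun h ↦ (mem_sdiff.mp hx).2 (mem_Iic.mpr h)).le
    _ = ∑ x ∈ s, f x := sum_inter_add_sum_sdiff _ _ _

theorem L_eq_prod_div_prod_sum_Ici {n : ℕ} (q : Fin n → ℝ) (π : Equiv.Perm (Fin n)) :
    L q π = (∏ i, q i) / ∏ i, ∑ j ∈ Ici i, q (π j) := by
  rw [L, prod_div_distrib, Equiv.prod_comp π q]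

theorem sum_Ici_revPerm_trans_le {n : ℕ} {q : Fin n → ℝ} {σ : Equiv.Perm (Fin n)}
    (hσ : Monotone fun j ↦ q (σ j)) (π : Equiv.Perm (Fin n)) (i : Fin n) :
    ∑ j ∈ Ici i, q ((Fin.revPerm.trans σ) j) ≤ ∑ j ∈ Ici i, q (π j) := by
  have hrev : ∑ j ∈ Ici i, q ((Fin.revPerm.trans σ) j) = ∑ k ∈ Iic i.rev, q (σ k) := by
    rw [← Fin.map_revPerm_Ici, sum_map]
    rfl
  have hπ : ∑ j ∈ Ici i, q (π j) = ∑ k ∈ (Ici i).map (π.trans σ⁻¹).toEmbedding, q (σ k) := by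
    simp [sum_map]
  rw [hrev, hπ]
  refine hσ.sum_Iic_le_sum_of_card_eq ?_
  rw [← Fin.map_revPerm_Ici, card_map, card_map]

theorem decreasing_maximizes_likelihood (n : ℕ) (q : Fin n → ℝ) (hq : ∀ i, 0 < q i)
    (σ : Equiv.Perm (Fin n)) (hσ : Monotone fun j => q (σ j))
    (π : Equiv.Perm (Fin n)) :
    L q π ≤ L q (Fin.revPerm.trans σ) := by
  have tail_pos (τ : Equiv.Perm (Fin n)) (i : Fin n) : 0 < ∑ j ∈ Ici i, q (τ j) :=
    sum_pos (fun j _ ↦ hq _) ⟨i, mem_Ici.mpr le_rfl⟩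
  rw [L_eq_prod_div_prod_sum_Ici, L_eq_prod_div_prod_sum_Ici]
  apply div_le_div_of_nonneg_left (prod_pos fun i _ ↦ hq i).le
    (prod_pos fun i _ ↦ tail_pos _ i)
  exact prod_le_prod (fun i _ ↦ (tail_pos _ i).le) fun i _ ↦ sum_Ici_revPerm_trans_le hσ π i
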